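/- Run the algorithm with parameters c̄ ≥ 1 and γ₁ > 0. Then for every k ≥ 0: F_{γ_{k+1}}(x^{k+1}) − F* ≤ (τ_k²/γ_{k+1})·[ ((1 − τ₀)·γ₁/τ₀²)·(F_{γ₀}(x⁰) − F*) + (‖A‖²/2)·‖x⁰ − x*‖² + S_k·D_U ], where S_k := γ₁²·c̄²·Σ_{i=0}^{k} [ (L_b − 1)/(i + c̄) + 1/(i + c̄)² ], τ₀ = 1/c̄, γ₀ := γ₁·c̄/(c̄ − 1) when c̄ > 1, and when c̄ = 1 the term ((1 − τ₀)·γ₁/τ₀²)·(F_{γ₀}(x⁰) − F*) is taken to be zero (since τ₀ = 1). -/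

import Mathlib

open scoped RealInnerProductSpace BigOperators

/-!
Strong convexity of `b` makes `φ*_γ` smooth with gradient `u*_γ` and constant `1/γ`, so
`f_γ = φ*_γ ∘ Aᵀ` is `‖A‖²/γ`-smooth and each iteration is an accelerated proximal gradient step
on `F_γ`. Evaluating `f_{γ_{k+1}}((1 - τ_k) x^k + τ_k x*)` at its own maximizer and using
`(1 - τ_k) γ_k ≤ γ_{k+1}` and `b ≥ 0` bounds it by `(1 - τ_k) f_{γ_k}(x^k) + τ_k f(x*)`, hence
`F_{γ_{k+1}}(x^{k+1}) - F* ≤ (1 - τ_k)(F_{γ_k}(x^k) - F*)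
  + τ_k² ‖A‖²/(2γ_{k+1}) (‖x* - x̃^k‖² - ‖x* - x̃^{k+1}‖²)`.
Multiplied by `γ_{k+1}/τ_k² = γ₁ c̄ (k + c̄)` this telescopes, and the bound holds already without
the nonnegative term `S_k D_U`.
-/

section StrongConvexity

variable {E : Type*} [NormedAddCommGroup E] [NormedSpace ℝ E] {s t : Set E} {m : ℝ}
  {f g : E → ℝ}

lemma StrongConvexOn.subset (hf : StrongConvexOn s m f) (hts : t ⊆ s) (ht : Convex ℝ t) :
    StrongConvexOn t m f :=
  ⟨ht, fun _ hx _ hy _ _ ha hb hab ↦ hf.2 (hts hx) (hts hy) ha hb hab⟩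

lemma StrongConvexOn.const_mul (hf : StrongConvexOn s m f) {c : ℝ} (hc : 0 ≤ c) :
    StrongConvexOn s (c * m) fun x ↦ c * f x := by
  refine ⟨hf.1, fun x hx y hy a b ha hb hab ↦ ?_⟩
  have := mul_le_mul_of_nonneg_left (hf.2 hx hy ha hb hab) hc
  simp only [smul_eq_mul] at this ⊢
  linarith

lemma StrongConvexOn.add_convexOn (hf : StrongConvexOn s m f) (hg : ConvexOn ℝ s g) :
    StrongConvexOn s m (f + g) := by
  have := hf.add hg.uniformConvexOn_zero
  rwa [add_zero] at this

lemma ConvexOn.add_strongConvexOn (hg : ConvexOn ℝ s g) (hf : StrongConvexOn s m f) :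
    StrongConvexOn s m (g + f) :=
  add_comm f g ▸ hf.add_convexOn hg

open Filter Topology in
theorem StrongConvexOn.add_sq_norm_sub_le_of_isMinOn (hf : StrongConvexOn s m f) {u v : E}
    (hmin : IsMinOn f s u) (hu : u ∈ s) (hv : v ∈ s) : f u + m / 2 * ‖v - u‖ ^ 2 ≤ f v := by
  set K := m / 2 * ‖v - u‖ ^ 2
  have hseg : ∀ t ∈ Set.Ioo (0 : ℝ) 1, f u + (1 - t) * K ≤ f v := by
    rintro t ⟨ht0, ht1⟩
    have hconv : f ((1 - t) • u + t • v) ≤ (1 - t) * f u + t * f v - (1 - t) * t * K := by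
      simpa only [smul_eq_mul, norm_sub_rev u v] using
        hf.2 hu hv (sub_nonneg.2 ht1.le) ht0.le (sub_add_cancel 1 t)
    have hle := isMinOn_iff.1 hmin _ (hf.1 hu hv (sub_nonneg.2 ht1.le) ht0.le (sub_add_cancel 1 t))
    have : t * (f u + (1 - t) * K) ≤ t * f v := by linarith
    exact le_of_mul_le_mul_left this ht0
  have hlim : Tendsto (fun t : ℝ ↦ f u + (1 - t) * K) (𝓝[>] 0) (𝓝 (f u + (1 - 0) * K)) :=
    ((continuous_const.add ((continuous_const.sub continuous_id).mul continuous_const)).tendsto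
      0).mono_left nhdsWithin_le_nhds
  simpa using le_of_tendsto hlim (mem_of_superset (Ioo_mem_nhdsGT one_pos) hseg)

end StrongConvexity

section InnerProduct

variable {E : Type*} [NormedAddCommGroup E] [InnerProductSpace ℝ E] {s : Set E}

lemma strongConvexOn_mul_sq_norm_sub (hs : Convex ℝ s) (c : ℝ) (x₀ : E) :
    StrongConvexOn s (2 * c) fun x ↦ c * ‖x - x₀‖ ^ 2 := by
  rw [strongConvexOn_iff_convex]
  have hlin : ConvexOn ℝ s ((-(2 * c)) • innerₛₗ ℝ x₀) := LinearMap.convexOn _ hs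
  refine (hlin.add_const (c * ‖x₀‖ ^ 2)).congr fun x _ ↦ ?_
  simp only [Pi.add_apply, LinearMap.smul_apply, innerₛₗ_apply_apply, smul_eq_mul, norm_sub_sq_real,
    real_inner_comm x₀ x]
  ring

end InnerProduct

section ProximalGradient

variable {F : Type*} [NormedAddCommGroup F] [InnerProductSpace ℝ F] {C : Set F} {g : F → ℝ}

theorem add_inner_le_of_isMinOn_prox (hg : ConvexOn ℝ C g) {β : ℝ} (hβ : 0 < β) {x d q y : F}
    (hq : q ∈ C) (hmin : IsMinOn (fun y ↦ g y + (2 * β)⁻¹ * ‖y - (x - β • d)‖ ^ 2) C q)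
    (hy : y ∈ C) :
    g q + ⟪d, q - y⟫ ≤ g y + (2 * β)⁻¹ * (‖y - x‖ ^ 2 - ‖y - q‖ ^ 2 - ‖q - x‖ ^ 2) := by
  have hgrowth := (hg.add_strongConvexOn (strongConvexOn_mul_sq_norm_sub hg.1 (2 * β)⁻¹
    (x - β • d))).add_sq_norm_sub_le_of_isMinOn hmin hq hy
  have hexpand : ∀ w : F,
      ‖w - (x - β • d)‖ ^ 2 = ‖w - x‖ ^ 2 + 2 * β * ⟪d, w - x⟫ + β ^ 2 * ‖d‖ ^ 2 := by
    intro w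
    rw [show w - (x - β • d) = (w - x) + β • d by abel, norm_add_sq_real, real_inner_smul_right,
      norm_smul, Real.norm_eq_abs, mul_pow, sq_abs, real_inner_comm]
    ring
  simp only [Pi.add_apply, hexpand] at hgrowth
  rw [show q - y = (q - x) - (y - x) by abel, inner_sub_right]
  field_simp at hgrowth ⊢
  linarith

theorem accelerated_step_le {h₀ h₁ : F → ℝ} (hg : ConvexOn ℝ C g) {β τ M : ℝ} (hβ : 0 < β)
    (hτ : 0 < τ) (hτ1 : τ ≤ 1) {x xt xh d x' xt' xs : F} (hx : x ∈ C) (hxs : xs ∈ C) (hx' : x' ∈ C)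
    (hxh : xh = (1 - τ) • x + τ • xt) (hxt' : xt' = xt - τ⁻¹ • (xh - x'))
    (hmin : IsMinOn (fun y ↦ g y + (2 * β)⁻¹ * ‖y - (xh - β • d)‖ ^ 2) C x')
    (hdesc : h₁ x' ≤ h₁ xh + ⟪x' - xh, d⟫ + (2 * β)⁻¹ * ‖x' - xh‖ ^ 2)
    (hsub : h₁ xh + ⟪(1 - τ) • x + τ • xs - xh, d⟫ ≤ h₁ ((1 - τ) • x + τ • xs))
    (hcomb : h₁ ((1 - τ) • x + τ • xs) ≤ (1 - τ) * h₀ x + τ * M) :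
    h₁ x' + g x' ≤ (1 - τ) * (h₀ x + g x) + τ * (M + g xs)
      + τ ^ 2 * (2 * β)⁻¹ * (‖xs - xt‖ ^ 2 - ‖xs - xt'‖ ^ 2) := by
  set y := (1 - τ) • x + τ • xs
  have hy : y ∈ C := hg.1 hx hxs (by linarith) hτ.le (by ring)
  have hprox := add_inner_le_of_isMinOn_prox hg hβ hx' hmin hy
  have hgy : g y ≤ (1 - τ) * g x + τ * g xs := hg.2 hx hxs (by linarith) hτ.le (by ring)
  have hyxh : y - xh = τ • (xs - xt) := by rw [hxh]; module
  have hτxt' : τ • xt' = τ • xt - (xh - x') := by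
    rw [hxt', smul_sub, smul_smul, mul_inv_cancel₀ hτ.ne', one_smul]
  have hyx' : y - x' = τ • (xs - xt') := by rw [smul_sub, hτxt', hxh]; module
  have hsq : ∀ w : F, ‖τ • w‖ ^ 2 = τ ^ 2 * ‖w‖ ^ 2 := fun w ↦ by
    rw [norm_smul, Real.norm_eq_abs, mul_pow, sq_abs]
  rw [hyxh, hyx', hsq, hsq] at hprox
  rw [hyxh] at hsub
  have hinner : ⟪d, x' - y⟫ = ⟪x' - xh, d⟫ - ⟪τ • (xs - xt), d⟫ := by
    rw [← hyxh, show x' - y = (x' - xh) - (y - xh) by abel, inner_sub_right, real_inner_comm d,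
      real_inner_comm d]
  linarith

end ProximalGradient

section SmoothedConjugate

variable {E : Type*} [NormedAddCommGroup E] [InnerProductSpace ℝ E]

/-- The paper's `φ*_γ(z)`, computed from the maximizer `u γ z` of `⟪z, ·⟫ - ψ - γ b`. -/
def smoothedConj (ψ b : E → ℝ) (u : ℝ → E → E) (γ : ℝ) (z : E) : ℝ :=
  ⟪z, u γ z⟫ - ψ (u γ z) - γ * b (u γ z)

structure IsSmoothedConjMaximizer (S : Set E) (ψ b : E → ℝ) (u : ℝ → E → E) : Prop where
  mem : ∀ γ > 0, ∀ z, u γ z ∈ S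
  isMaxOn : ∀ γ > 0, ∀ z, IsMaxOn (fun v ↦ ⟪z, v⟫ - ψ v - γ * b v) S (u γ z)

namespace IsSmoothedConjMaximizer

variable {S : Set E} {ψ b : E → ℝ} {u : ℝ → E → E} {γ : ℝ}

lemma le_smoothedConj (hu : IsSmoothedConjMaximizer S ψ b u) (hγ : 0 < γ) (z : E) {v : E}
    (hv : v ∈ S) : ⟪z, v⟫ - ψ v - γ * b v ≤ smoothedConj ψ b u γ z :=
  isMaxOn_iff.1 (hu.isMaxOn γ hγ z) v hv

lemma add_inner_le_smoothedConj (hu : IsSmoothedConjMaximizer S ψ b u) (hγ : 0 < γ) (z z' : E) :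
    smoothedConj ψ b u γ z + ⟪z' - z, u γ z⟫ ≤ smoothedConj ψ b u γ z' := by
  have := hu.le_smoothedConj hγ z' (hu.mem γ hγ z)
  unfold smoothedConj at *
  rw [inner_sub_left]
  linarith

lemma add_sq_norm_sub_le_smoothedConj (hu : IsSmoothedConjMaximizer S ψ b u)
    (hψ : ConvexOn ℝ S ψ) (hb : StrongConvexOn S 1 b) (hγ : 0 < γ) (z : E) {v : E}
    (hv : v ∈ S) :
    ⟪z, v⟫ - ψ v - γ * b v + γ / 2 * ‖v - u γ z‖ ^ 2 ≤ smoothedConj ψ b u γ z := by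
  have hconv : ConvexOn ℝ S fun v ↦ ψ v - ⟪z, v⟫ :=
    hψ.sub ((innerₛₗ ℝ z).concaveOn hψ.1)
  have hstrong := (hb.const_mul hγ.le).add_convexOn hconv
  rw [mul_one] at hstrong
  have hmin : IsMinOn (fun v ↦ γ * b v + (ψ v - ⟪z, v⟫)) S (u γ z) :=
    isMinOn_iff.2 fun w hw ↦ by
      have := hu.le_smoothedConj hγ z hw
      rw [smoothedConj] at this
      linarith
  have := hstrong.add_sq_norm_sub_le_of_isMinOn hmin (hu.mem γ hγ z) hv
  simp only [Pi.add_apply] at this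
  rw [smoothedConj]
  linarith

lemma smoothedConj_le_add_inner_add (hu : IsSmoothedConjMaximizer S ψ b u)
    (hψ : ConvexOn ℝ S ψ) (hb : StrongConvexOn S 1 b) (hγ : 0 < γ) (z z' : E) :
    smoothedConj ψ b u γ z'
      ≤ smoothedConj ψ b u γ z + ⟪z' - z, u γ z⟫ + ‖z' - z‖ ^ 2 / (2 * γ) := by
  have hgrowth := hu.add_sq_norm_sub_le_smoothedConj hψ hb hγ z (hu.mem γ hγ z')
  set δ := u γ z' - u γ z
  have hcs : ⟪z' - z, δ⟫ ≤ ‖z' - z‖ * ‖δ‖ := real_inner_le_norm _ _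
  have hyoung : ‖z' - z‖ * ‖δ‖ - γ / 2 * ‖δ‖ ^ 2 ≤ ‖z' - z‖ ^ 2 / (2 * γ) := by
    rw [le_div_iff₀ (by positivity)]
    nlinarith [sq_nonneg (‖z' - z‖ - γ * ‖δ‖)]
  have hsplit : ⟪z' - z, u γ z'⟫ = ⟪z' - z, u γ z⟫ + ⟪z' - z, δ⟫ := by
    rw [← inner_add_right, add_sub_cancel]
  unfold smoothedConj at hgrowth ⊢
  rw [inner_sub_left] at hsplit
  linarith

lemma smoothedConj_convexComb_le (hu : IsSmoothedConjMaximizer S ψ b u)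
    (hb0 : ∀ v ∈ S, 0 ≤ b v) {τ γ' M : ℝ} (hτ0 : 0 ≤ τ) (hτ1 : τ ≤ 1) (hγ' : 0 < γ')
    (hγ : 0 < γ ∨ τ = 1) (hγγ' : (1 - τ) * γ ≤ γ') {z w : E}
    (hM : ∀ v ∈ S, ⟪w, v⟫ - ψ v ≤ M) :
    smoothedConj ψ b u γ' ((1 - τ) • z + τ • w) ≤ (1 - τ) * smoothedConj ψ b u γ z + τ * M := by
  set v := u γ' ((1 - τ) • z + τ • w)
  have hv : v ∈ S := hu.mem γ' hγ' _
  have hz : (1 - τ) * (⟪z, v⟫ - ψ v - γ * b v) ≤ (1 - τ) * smoothedConj ψ b u γ z := by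
    rcases hγ with hγ | rfl
    · exact mul_le_mul_of_nonneg_left (hu.le_smoothedConj hγ z hv) (by linarith)
    · simp
  have hw : τ * (⟪w, v⟫ - ψ v) ≤ τ * M := mul_le_mul_of_nonneg_left (hM v hv) hτ0
  have hbv : 0 ≤ (γ' - (1 - τ) * γ) * b v := mul_nonneg (by linarith) (hb0 v hv)
  rw [smoothedConj, inner_add_left, real_inner_smul_left, real_inner_smul_left]
  linear_combination hz + hw + hbv

end IsSmoothedConjMaximizer

end SmoothedConjugate

section Composite

open ContinuousLinearMap

variable {E F : Type*} [NormedAddCommGroup E] [InnerProductSpace ℝ E] [CompleteSpace E]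
  [NormedAddCommGroup F] [InnerProductSpace ℝ F] [CompleteSpace F]
  {S : Set E} {ψ b : E → ℝ} {u : ℝ → E → E} {γ : ℝ}

namespace IsSmoothedConjMaximizer

lemma smoothedConj_adjoint_le_add_inner_add (hu : IsSmoothedConjMaximizer S ψ b u)
    (hψ : ConvexOn ℝ S ψ) (hb : StrongConvexOn S 1 b) (hγ : 0 < γ) (A : E →L[ℝ] F) (x x' : F) :
    smoothedConj ψ b u γ (adjoint A x') ≤ smoothedConj ψ b u γ (adjoint A x)
      + ⟪x' - x, A (u γ (adjoint A x))⟫ + ‖A‖ ^ 2 / (2 * γ) * ‖x' - x‖ ^ 2 := by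
  have hsmooth := hu.smoothedConj_le_add_inner_add hψ hb hγ (adjoint A x) (adjoint A x')
  rw [← map_sub, adjoint_inner_left] at hsmooth
  have hnorm : ‖adjoint A (x' - x)‖ ≤ ‖A‖ * ‖x' - x‖ := by
    simpa only [LinearIsometryEquiv.norm_map] using (adjoint A).le_opNorm (x' - x)
  have hsq : ‖adjoint A (x' - x)‖ ^ 2 / (2 * γ) ≤ ‖A‖ ^ 2 / (2 * γ) * ‖x' - x‖ ^ 2 := by
    rw [div_mul_eq_mul_div, ← mul_pow]
    gcongr
  linarith

lemma smoothedConj_adjoint_add_inner_le (hu : IsSmoothedConjMaximizer S ψ b u) (hγ : 0 < γ)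
    (A : E →L[ℝ] F) (x y : F) :
    smoothedConj ψ b u γ (adjoint A x) + ⟪y - x, A (u γ (adjoint A x))⟫
      ≤ smoothedConj ψ b u γ (adjoint A y) := by
  simpa only [← map_sub, adjoint_inner_left] using
    hu.add_inner_le_smoothedConj hγ (adjoint A x) (adjoint A y)

end IsSmoothedConjMaximizer

end Composite

section Schedule

noncomputable def stepSize (c : ℝ) (k : ℕ) : ℝ := 1 / ((k : ℝ) + c)

/-- For `c = 1` the value at `k = 0` is the junk value `γ₁ / 0 = 0`; it only ever enters
multiplied by `1 - stepSize 1 0 = 0`. -/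
noncomputable def smoothingParam (γ₁ c : ℝ) (k : ℕ) : ℝ := γ₁ * c / ((k : ℝ) + c - 1)

variable {c γ₁ : ℝ} (k : ℕ)

lemma stepSize_pos (hc : 1 ≤ c) : 0 < stepSize c k := by
  unfold stepSize; positivity

lemma stepSize_le_one (hc : 1 ≤ c) : stepSize c k ≤ 1 := by
  rw [stepSize, div_le_one (by positivity)]
  linarith [k.cast_nonneg (α := ℝ)]

lemma smoothingParam_succ : smoothingParam γ₁ c (k + 1) = γ₁ * c / ((k : ℝ) + c) := by
  rw [smoothingParam]; push_cast; ring_nf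

lemma smoothingParam_succ_pos (hc : 1 ≤ c) (hγ₁ : 0 < γ₁) : 0 < smoothingParam γ₁ c (k + 1) := by
  rw [smoothingParam_succ]; positivity

lemma smoothingParam_one (hc : 1 ≤ c) : smoothingParam γ₁ c 1 = γ₁ := by
  rw [← zero_add 1, smoothingParam_succ, Nat.cast_zero, zero_add, mul_div_cancel_right₀]
  positivity

lemma smoothingParam_succ_div_stepSize_sq (hc : 1 ≤ c) :
    smoothingParam γ₁ c (k + 1) / stepSize c k ^ 2 = γ₁ * c * ((k : ℝ) + c) := by
  have hk : (k : ℝ) + c ≠ 0 := by positivity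
  rw [smoothingParam_succ, stepSize]
  field_simp

lemma smoothingParam_pos_or_stepSize_eq_one (hc : 1 ≤ c) (hγ₁ : 0 < γ₁) :
    0 < smoothingParam γ₁ c k ∨ stepSize c k = 1 := by
  rcases (le_add_of_nonneg_left (k.cast_nonneg (α := ℝ)) |>.trans' hc).eq_or_lt with h | h
  · right; rw [stepSize, ← h, div_one]
  · left; rw [smoothingParam]; exact div_pos (by positivity) (by linarith)

lemma one_sub_stepSize_mul_smoothingParam_le (hc : 1 ≤ c) (hγ₁ : 0 < γ₁) :
    (1 - stepSize c k) * smoothingParam γ₁ c k ≤ smoothingParam γ₁ c (k + 1) := by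
  rcases smoothingParam_pos_or_stepSize_eq_one k hc hγ₁ with h | h
  · have hk : (k : ℝ) + c - 1 ≠ 0 := by
      intro h0; rw [smoothingParam, h0, div_zero] at h; exact h.false
    refine le_of_eq ?_
    rw [smoothingParam_succ, smoothingParam, stepSize]
    field_simp
  · rw [h, sub_self, zero_mul]
    exact (smoothingParam_succ_pos k hc hγ₁).le

end Schedule

theorem weighted_telescoping_le {e R w a : ℕ → ℝ} {K : ℝ}
    (hstep : ∀ k, w k * e (k + 1) ≤ a k * e k + K * (R k - R (k + 1)))
    (hwa : ∀ k, a (k + 1) = w k) (k : ℕ) :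
    w k * e (k + 1) ≤ a 0 * e 0 + K * (R 0 - R (k + 1)) := by
  induction k with
  | zero => simpa using hstep 0
  | succ k ih =>
    have := hstep (k + 1)
    rw [hwa k] at this
    linarith

section Rate

open ContinuousLinearMap

variable {E F : Type*} [NormedAddCommGroup E] [InnerProductSpace ℝ E] [CompleteSpace E]
  [NormedAddCommGroup F] [InnerProductSpace ℝ F] [CompleteSpace F]
  {S : Set E} {ψ b : E → ℝ} {u : ℝ → E → E} {C : Set F} {g : F → ℝ} {prox : ℝ → F → F}

theorem IsSmoothedConjMaximizer.smoothedConj_add_le_of_acceleratedStep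
    (hu : IsSmoothedConjMaximizer S ψ b u) (hψ : ConvexOn ℝ S ψ) (hb : StrongConvexOn S 1 b)
    (hb0 : ∀ v ∈ S, 0 ≤ b v) (A : E →L[ℝ] F) (hA : 0 < ‖A‖) (hg : ConvexOn ℝ C g)
    (hprox : ∀ β > 0, ∀ s, prox β s ∈ C ∧
      IsMinOn (fun y ↦ g y + (2 * β)⁻¹ * ‖y - s‖ ^ 2) C (prox β s))
    {τ γ γ' M : ℝ} (hτ : 0 < τ) (hτ1 : τ ≤ 1) (hγ' : 0 < γ') (hγ : 0 < γ ∨ τ = 1)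
    (hγγ' : (1 - τ) * γ ≤ γ') {x xt xh x' xt' xs : F} (hx : x ∈ C) (hxs : xs ∈ C)
    (hxh : xh = (1 - τ) • x + τ • xt)
    (hx' : x' = prox (γ' / ‖A‖ ^ 2) (xh - (γ' / ‖A‖ ^ 2) • A (u γ' (adjoint A xh))))
    (hxt' : xt' = xt - τ⁻¹ • (xh - x')) (hM : ∀ v ∈ S, ⟪adjoint A xs, v⟫ - ψ v ≤ M) :
    smoothedConj ψ b u γ' (adjoint A x') + g x'
      ≤ (1 - τ) * (smoothedConj ψ b u γ (adjoint A x) + g x) + τ * (M + g xs)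
        + τ ^ 2 * (‖A‖ ^ 2 / (2 * γ')) * (‖xs - xt‖ ^ 2 - ‖xs - xt'‖ ^ 2) := by
  have hβ : 0 < γ' / ‖A‖ ^ 2 := div_pos hγ' (by positivity)
  have hβinv : (2 * (γ' / ‖A‖ ^ 2))⁻¹ = ‖A‖ ^ 2 / (2 * γ') := by field_simp
  obtain ⟨hx'C, hmin⟩ := hx' ▸ hprox _ hβ (xh - (γ' / ‖A‖ ^ 2) • A (u γ' (adjoint A xh)))
  have hdesc := hu.smoothedConj_adjoint_le_add_inner_add hψ hb hγ' A xh x'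
  rw [← hβinv] at hdesc
  have hcomb : smoothedConj ψ b u γ' (adjoint A ((1 - τ) • x + τ • xs))
      ≤ (1 - τ) * smoothedConj ψ b u γ (adjoint A x) + τ * M := by
    simpa only [map_add, map_smul] using
      hu.smoothedConj_convexComb_le hb0 hτ.le hτ1 hγ' hγ hγγ' hM
  have := accelerated_step_le (h₀ := fun y ↦ smoothedConj ψ b u γ (adjoint A y))
    (h₁ := fun y ↦ smoothedConj ψ b u γ' (adjoint A y)) hg hβ hτ hτ1 hx hxs hx'C hxh hxt' hmin hdesc
    (hu.smoothedConj_adjoint_add_inner_le hγ' A xh _) hcomb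
  rwa [hβinv] at this

theorem smoothedConj_add_sub_le_of_acceleratedIterates
    (hu : IsSmoothedConjMaximizer S ψ b u) (hψ : ConvexOn ℝ S ψ) (hb : StrongConvexOn S 1 b)
    (hb0 : ∀ v ∈ S, 0 ≤ b v) (A : E →L[ℝ] F) (hA : 0 < ‖A‖) (hg : ConvexOn ℝ C g)
    (hprox : ∀ β > 0, ∀ s, prox β s ∈ C ∧
      IsMinOn (fun y ↦ g y + (2 * β)⁻¹ * ‖y - s‖ ^ 2) C (prox β s))
    {c γ₁ : ℝ} (hc : 1 ≤ c) (hγ₁ : 0 < γ₁) {x xt xh : ℕ → F} (hxt0 : xt 0 = x 0) (hx0 : x 0 ∈ C)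
    (hxh : ∀ k, xh k = (1 - stepSize c k) • x k + stepSize c k • xt k)
    (hxrec : ∀ k, x (k + 1) = prox (smoothingParam γ₁ c (k + 1) / ‖A‖ ^ 2)
      (xh k - (smoothingParam γ₁ c (k + 1) / ‖A‖ ^ 2) •
        A (u (smoothingParam γ₁ c (k + 1)) (adjoint A (xh k)))))
    (hxtrec : ∀ k, xt (k + 1) = xt k - (stepSize c k)⁻¹ • (xh k - x (k + 1)))
    {xs : F} (hxs : xs ∈ C) {M : ℝ} (hM : ∀ v ∈ S, ⟪adjoint A xs, v⟫ - ψ v ≤ M) (k : ℕ) :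
    smoothedConj ψ b u (smoothingParam γ₁ c (k + 1)) (adjoint A (x (k + 1))) + g (x (k + 1))
        - (M + g xs)
      ≤ stepSize c k ^ 2 / smoothingParam γ₁ c (k + 1) *
        ((1 - stepSize c 0) * γ₁ / stepSize c 0 ^ 2 *
            (smoothedConj ψ b u (smoothingParam γ₁ c 0) (adjoint A (x 0)) + g (x 0) - (M + g xs))
          + ‖A‖ ^ 2 / 2 * ‖x 0 - xs‖ ^ 2) := by
  set τ := stepSize c
  set γ := smoothingParam γ₁ c
  set e : ℕ → ℝ := fun j ↦ smoothedConj ψ b u (γ j) (adjoint A (x j)) + g (x j) - (M + g xs)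
  set R : ℕ → ℝ := fun j ↦ ‖xs - xt j‖ ^ 2
  have hτ : ∀ j, 0 < τ j := fun j ↦ stepSize_pos j hc
  have hγ : ∀ j, 0 < γ (j + 1) := fun j ↦ smoothingParam_succ_pos j hc hγ₁
  have hxC : ∀ j, x j ∈ C := by
    rintro (_ | j)
    · exact hx0
    · rw [hxrec j]
      exact (hprox _ (div_pos (hγ j) (by positivity)) _).1
  have hweighted : ∀ j, γ (j + 1) / τ j ^ 2 * e (j + 1)
      ≤ γ (j + 1) / τ j ^ 2 * (1 - τ j) * e j + ‖A‖ ^ 2 / 2 * (R j - R (j + 1)) := by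
    intro j
    have hstep := hu.smoothedConj_add_le_of_acceleratedStep hψ hb hb0 A hA hg hprox (hτ j)
      (stepSize_le_one j hc) (hγ j) (smoothingParam_pos_or_stepSize_eq_one j hc hγ₁)
      (one_sub_stepSize_mul_smoothingParam_le j hc hγ₁) (hxC j) hxs (hxh j) (hxrec j)
      (hxtrec j) hM
    have hcancel : γ (j + 1) / τ j ^ 2 * τ j ^ 2 * (‖A‖ ^ 2 / (2 * γ (j + 1))) = ‖A‖ ^ 2 / 2 := by
      field_simp [(hτ j).ne', (hγ j).ne']
    have := mul_le_mul_of_nonneg_left (show e (j + 1) ≤ (1 - τ j) * e j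
        + τ j ^ 2 * (‖A‖ ^ 2 / (2 * γ (j + 1))) * (R j - R (j + 1)) by simp only [e, R]; linarith)
      (div_nonneg (hγ j).le (sq_nonneg (τ j)))
    simpa only [mul_add, ← mul_assoc, hcancel] using this
  have hwa : ∀ j, γ (j + 2) / τ (j + 1) ^ 2 * (1 - τ (j + 1)) = γ (j + 1) / τ j ^ 2 := by
    intro j
    rw [smoothingParam_succ_div_stepSize_sq _ hc, smoothingParam_succ_div_stepSize_sq _ hc]
    have hj : (j : ℝ) + 1 + c ≠ 0 := by positivity
    simp only [τ, stepSize]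
    push_cast
    field_simp
    ring
  have htele := weighted_telescoping_le hweighted hwa k
  have ha0 : γ 1 / τ 0 ^ 2 * (1 - τ 0) = (1 - τ 0) * γ₁ / τ 0 ^ 2 := by
    simp only [γ, smoothingParam_one hc]; ring
  have hR0 : R 0 = ‖x 0 - xs‖ ^ 2 := by simp only [R, hxt0, norm_sub_rev]
  have hRk : 0 ≤ ‖A‖ ^ 2 / 2 * R (k + 1) := by positivity
  rw [ha0, hR0] at htele
  show e (k + 1)
    ≤ τ k ^ 2 / γ (k + 1) * ((1 - τ 0) * γ₁ / τ 0 ^ 2 * e 0 + ‖A‖ ^ 2 / 2 * ‖x 0 - xs‖ ^ 2)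
  calc e (k + 1) = τ k ^ 2 / γ (k + 1) * (γ (k + 1) / τ k ^ 2 * e (k + 1)) := by
        field_simp [(hτ k).ne', (hγ k).ne']
    _ ≤ _ := mul_le_mul_of_nonneg_left (by linarith) (div_nonneg (sq_nonneg _) (hγ k).le)

end Rate

section ExtendedReal

lemma EReal.toReal_le_of_le_coe {a : EReal} {r : ℝ} (ha : a ≠ ⊥) (h : a ≤ r) : a.toReal ≤ r := by
  simpa using EReal.toReal_le_toReal h ha (EReal.coe_ne_top r)

lemma EReal.le_toReal_of_coe_le {a : EReal} {r : ℝ} (ha : a ≠ ⊤) (h : (r : EReal) ≤ a) :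
    r ≤ a.toReal := by
  simpa using EReal.toReal_le_toReal h (EReal.coe_ne_bot r) ha

variable {E : Type*} [AddCommGroup E] [Module ℝ E] {φ : E → EReal}

theorem convexOn_toReal_setOf_ne_top (hbot : ∀ v, φ v ≠ ⊥)
    (hcx : ∀ v w : E, ∀ a c : ℝ, 0 ≤ a → 0 ≤ c → a + c = 1 →
      φ (a • v + c • w) ≤ (a : EReal) * φ v + (c : EReal) * φ w) :
    ConvexOn ℝ {v | φ v ≠ ⊤} fun v ↦ (φ v).toReal := by
  have hle : ∀ v ∈ {v | φ v ≠ ⊤}, ∀ w ∈ {v | φ v ≠ ⊤}, ∀ a c : ℝ, 0 ≤ a → 0 ≤ c → a + c = 1 →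
      φ (a • v + c • w) ≤ ((a * (φ v).toReal + c * (φ w).toReal : ℝ) : EReal) := by
    intro v hv w hw a c ha hc hac
    have := hcx v w a c ha hc hac
    rwa [← EReal.coe_toReal hv (hbot v), ← EReal.coe_toReal hw (hbot w), ← EReal.coe_mul,
      ← EReal.coe_mul, ← EReal.coe_add] at this
  refine ⟨fun v hv w hw a c ha hc hac ↦ ?_, fun v hv w hw a c ha hc hac ↦ ?_⟩
  · exact ne_top_of_le_ne_top (EReal.coe_ne_top _) (hle v hv w hw a c ha hc hac)
  · exact EReal.toReal_le_of_le_coe (hbot _) (hle v hv w hw a c ha hc hac)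

lemma ne_top_and_isMinOn_toReal_add {α : Type*} {g : α → EReal} (hbot : ∀ y, g y ≠ ⊥)
    {r : α → ℝ} {q y₀ : α} (hy₀ : g y₀ ≠ ⊤) (hq : ∀ y, g q + (r q : EReal) ≤ g y + (r y : EReal)) :
    g q ≠ ⊤ ∧ IsMinOn (fun y ↦ (g y).toReal + r y) {y | g y ≠ ⊤} q := by
  have hfin : g q ≠ ⊤ := by
    intro htop
    have := hq y₀
    rw [htop, EReal.top_add_of_ne_bot (EReal.coe_ne_bot _), top_le_iff,
      ← EReal.coe_toReal hy₀ (hbot y₀)] at this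
    exact EReal.coe_ne_top _ this
  refine ⟨hfin, isMinOn_iff.2 fun y hy ↦ ?_⟩
  have := hq y
  rw [← EReal.coe_toReal hfin (hbot q), ← EReal.coe_toReal hy (hbot y)] at this
  exact_mod_cast this

lemma EReal.coe_sub_toReal_le_biSup {ι : Type*} {U : Set ι} {φ : ι → EReal} {r : ι → ℝ} {v : ι}
    (hv : v ∈ U) (hvt : φ v ≠ ⊤) (hvb : φ v ≠ ⊥) :
    ((r v - (φ v).toReal : ℝ) : EReal) ≤ ⨆ w ∈ U, ((r w : EReal) - φ w) := by
  rw [EReal.coe_sub, EReal.coe_toReal hvt hvb]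
  exact le_biSup (fun w ↦ (r w : EReal) - φ w) hv

end ExtendedReal

lemma isSmoothedConjMaximizer_of_ereal {E : Type*} [NormedAddCommGroup E] [InnerProductSpace ℝ E]
    {U : Set E} {φ : E → EReal} (hbot : ∀ v, φ v ≠ ⊥) {b : E → ℝ} {u : ℝ → E → E}
    (hmem : ∀ γ > (0:ℝ), ∀ z, u γ z ∈ U) (hfin : ∀ γ > (0:ℝ), ∀ z, φ (u γ z) ≠ ⊤)
    (hmax : ∀ γ > (0:ℝ), ∀ z, ∀ v ∈ U,
      (⟪z, v⟫ : EReal) - φ v - ((γ * b v : ℝ) : EReal)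
        ≤ (⟪z, u γ z⟫ : EReal) - φ (u γ z) - ((γ * b (u γ z) : ℝ) : EReal)) :
    IsSmoothedConjMaximizer {v | v ∈ U ∧ φ v ≠ ⊤} (fun v ↦ (φ v).toReal) b u := by
  refine ⟨fun γ hγ z ↦ ⟨hmem γ hγ z, hfin γ hγ z⟩, fun γ hγ z ↦ isMaxOn_iff.2 ?_⟩
  rintro v ⟨hv, hvt⟩
  have := hmax γ hγ z v hv
  rw [← EReal.coe_toReal hvt (hbot v), ← EReal.coe_toReal (hfin γ hγ z) (hbot _)] at this
  exact_mod_cast this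

theorem stmt_14_general
    {n : ℕ}
    (U : Set (EuclideanSpace ℝ (Fin n)))
    (hUcx : Convex ℝ U)
    (φ : EuclideanSpace ℝ (Fin n) → EReal)
    (hφbot : ∀ v, φ v ≠ ⊥)
    (hφcx : ∀ v w : EuclideanSpace ℝ (Fin n), ∀ a c : ℝ, 0 ≤ a → 0 ≤ c → a + c = 1 →
      φ (a • v + c • w) ≤ (a : EReal) * φ v + (c : EReal) * φ w)
    (b : EuclideanSpace ℝ (Fin n) → ℝ)
    (hbsc : StrongConvexOn U 1 b)
    (ustar : ℝ → EuclideanSpace ℝ (Fin n) → EuclideanSpace ℝ (Fin n))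
    (humem : ∀ γ > (0:ℝ), ∀ z, ustar γ z ∈ U)
    (hufin : ∀ γ > (0:ℝ), ∀ z, φ (ustar γ z) ≠ ⊤)
    (humax : ∀ γ > (0:ℝ), ∀ z, ∀ v ∈ U,
      (⟪z, v⟫ : EReal) - φ v - ((γ * b v : ℝ) : EReal)
        ≤ (⟪z, ustar γ z⟫ : EReal) - φ (ustar γ z) - ((γ * b (ustar γ z) : ℝ) : EReal))
    (φs : ℝ → EuclideanSpace ℝ (Fin n) → ℝ)
    (hφs : ∀ γ z, φs γ z = ⟪z, ustar γ z⟫ - (φ (ustar γ z)).toReal - γ * b (ustar γ z))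
    {p : ℕ}
    (A : EuclideanSpace ℝ (Fin n) →L[ℝ] EuclideanSpace ℝ (Fin p))
    (hAnorm : 0 < ‖A‖)
    (Lb : ℝ) (hLb : 1 ≤ Lb)
    (uc : EuclideanSpace ℝ (Fin n)) (hbuc : b uc = 0)
    (hucmin : ∀ v ∈ U, b uc ≤ b v)
    (DU : ℝ)
    (hDUbdd : BddAbove (b '' {v | v ∈ U ∧ φ v ≠ ⊤}))
    (hDU : DU = sSup (b '' {v | v ∈ U ∧ φ v ≠ ⊤}))
    (f : EuclideanSpace ℝ (Fin p) → EReal)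
    (hf : ∀ x, f x = ⨆ v ∈ U, ((⟪x, A v⟫ : EReal) - φ v))
    (g : EuclideanSpace ℝ (Fin p) → EReal)
    (hgbot : ∀ y, g y ≠ ⊥)
    (hgcx : ∀ y w : EuclideanSpace ℝ (Fin p), ∀ a c : ℝ, 0 ≤ a → 0 ≤ c → a + c = 1 →
      g (a • y + c • w) ≤ (a : EReal) * g y + (c : EReal) * g w)
    (prox : ℝ → EuclideanSpace ℝ (Fin p) → EuclideanSpace ℝ (Fin p))
    (hprox : ∀ β > (0:ℝ), ∀ x y,
      g (prox β x) + (((2*β)⁻¹ * ‖prox β x - x‖^2 : ℝ) : EReal)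
        ≤ g y + (((2*β)⁻¹ * ‖y - x‖^2 : ℝ) : EReal))
    (cb γ1 : ℝ) (hcb : 1 ≤ cb) (hγ1 : 0 < γ1)
    (τ : ℕ → ℝ) (hτ : ∀ k : ℕ, τ k = 1/((k:ℝ) + cb))
    (γs : ℕ → ℝ) (hγs : ∀ k : ℕ, γs k = γ1 * cb / ((k:ℝ) + cb - 1))
    (x xt xh : ℕ → EuclideanSpace ℝ (Fin p))
    (hxt0 : xt 0 = x 0) (hx0dom : f (x 0) + g (x 0) ≠ ⊤)
    (hxh : ∀ k : ℕ, xh k = (1 - τ k) • x k + τ k • xt k)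
    (hxrec : ∀ k : ℕ, x (k+1)
        = prox (γs (k+1)/‖A‖^2) (xh k - (γs (k+1)/‖A‖^2) • A (ustar (γs (k+1)) ((ContinuousLinearMap.adjoint A) (xh k)))))
    (hxtrec : ∀ k : ℕ, xt (k+1) = xt k - (τ k)⁻¹ • (xh k - x (k+1)))
    (xs : EuclideanSpace ℝ (Fin p)) (Fs : ℝ)
    (hFs : f xs + g xs = (Fs : EReal))
    (S : ℕ → ℝ)
    (hS : ∀ k : ℕ, S k = γ1^2 * cb^2 *
        ∑ i ∈ Finset.range (k+1), ((Lb - 1)/((i:ℝ) + cb) + 1/((i:ℝ) + cb)^2))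
    :
    ∀ k : ℕ,
      (((φs (γs (k+1)) ((ContinuousLinearMap.adjoint A) (x (k+1))) : ℝ) : EReal) + g (x (k+1))) - (Fs : EReal)
        ≤ (((τ k)^2 / γs (k+1) : ℝ) : EReal) *
            ( (((1 - τ 0) * γ1 / (τ 0)^2 : ℝ) : EReal) *
                ((((φs (γs 0) ((ContinuousLinearMap.adjoint A) (x 0)) : ℝ) : EReal) + g (x 0)) - (Fs : EReal))
              + ((‖A‖^2/2 * ‖x 0 - xs‖^2 + S k * DU : ℝ) : EReal) ) := by
  obtain rfl : τ = stepSize cb := funext hτ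
  obtain rfl : γs = smoothingParam γ1 cb := funext hγs
  obtain rfl : φs = smoothedConj (fun v ↦ (φ v).toReal) b ustar := funext₂ hφs
  set dom := {v | v ∈ U ∧ φ v ≠ ⊤}
  have hdom : Convex ℝ dom := hUcx.inter (convexOn_toReal_setOf_ne_top hφbot hφcx).1
  have hu := isSmoothedConjMaximizer_of_ereal hφbot humem hufin humax
  have hb0 : ∀ v ∈ dom, 0 ≤ b v := fun v hv ↦ hbuc ▸ hucmin v hv.1
  have hfU : ∀ y, ∀ v ∈ dom, ⟪ContinuousLinearMap.adjoint A y, v⟫ - (φ v).toReal ≤ f y := by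
    intro y v hv
    rw [hf, ContinuousLinearMap.adjoint_inner_left]
    exact EReal.coe_sub_toReal_le_biSup (r := fun w ↦ ⟪y, A w⟫) hv.1 hv.2 (hφbot v)
  have hv₀ := hu.mem 1 one_pos 0
  have hfbot : ∀ y, f y ≠ ⊥ := fun y ↦ ne_bot_of_le_ne_bot (EReal.coe_ne_bot _) (hfU y _ hv₀)
  have hg0 : g (x 0) ≠ ⊤ := ((EReal.add_ne_top_iff_ne_top₂ (hfbot _) (hgbot _)).1 hx0dom).2
  have hprox' := fun β (hβ : 0 < β) s ↦ ne_top_and_isMinOn_toReal_add hgbot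
    (r := fun y ↦ (2 * β)⁻¹ * ‖y - s‖ ^ 2) hg0 (hprox β hβ s)
  obtain ⟨hfxs, hgxs⟩ := (EReal.add_ne_top_iff_ne_top₂ (hfbot xs) (hgbot xs)).1
    (hFs ▸ EReal.coe_ne_top Fs)
  have hFs' : Fs = (f xs).toReal + (g xs).toReal := by
    rw [← EReal.toReal_add hfxs (hfbot xs) hgxs (hgbot xs), hFs, EReal.toReal_coe]
  intro k
  have hrate := smoothedConj_add_sub_le_of_acceleratedIterates hu
    ((convexOn_toReal_setOf_ne_top hφbot hφcx).subset (fun v hv ↦ hv.2) hdom)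
    (hbsc.subset (fun v hv ↦ hv.1) hdom) hb0 A hAnorm (convexOn_toReal_setOf_ne_top hgbot hgcx)
    hprox' hcb hγ1 hxt0 hg0 hxh hxrec hxtrec hgxs
    (fun v hv ↦ EReal.le_toReal_of_coe_le hfxs (hfU xs v hv)) k
  have hgk : g (x (k + 1)) ≠ ⊤ := by
    rw [hxrec k]
    exact (hprox' _ (div_pos (smoothingParam_succ_pos k hcb hγ1) (by positivity)) _).1
  have hDU0 : 0 ≤ DU := hDU ▸ (hb0 _ hv₀).trans (le_csSup hDUbdd ⟨_, hv₀, rfl⟩)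
  have hS0 : 0 ≤ S k := by
    rw [hS k]
    refine mul_nonneg (by positivity) (Finset.sum_nonneg fun i _ ↦ ?_)
    have : 0 ≤ Lb - 1 := by linarith
    positivity
  have hweight : 0 ≤ stepSize cb k ^ 2 / smoothingParam γ1 cb (k + 1) :=
    div_nonneg (sq_nonneg _) (smoothingParam_succ_pos k hcb hγ1).le
  rw [← EReal.coe_toReal hgk (hgbot _), ← EReal.coe_toReal hg0 (hgbot _)]
  norm_cast
  rw [hFs']
  linarith [mul_nonneg hweight (mul_nonneg hS0 hDU0)]

theorem stmt_14
    {n : ℕ} (hn : 1 ≤ n)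
    (U : Set (EuclideanSpace ℝ (Fin n)))
    (hUne : U.Nonempty) (hUcl : IsClosed U) (hUcx : Convex ℝ U)
    (φ : EuclideanSpace ℝ (Fin n) → EReal)
    (hφbot : ∀ v, φ v ≠ ⊥)
    (hφlsc : LowerSemicontinuous φ)
    (hφcx : ∀ v w : EuclideanSpace ℝ (Fin n), ∀ a c : ℝ, 0 ≤ a → 0 ≤ c → a + c = 1 →
      φ (a • v + c • w) ≤ (a : EReal) * φ v + (c : EReal) * φ w)
    (hφdom : ∃ v ∈ U, φ v ≠ ⊤)
    (b : EuclideanSpace ℝ (Fin n) → ℝ)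
    (hbcont : Continuous b)
    (hbsc : StrongConvexOn U 1 b)
    (ustar : ℝ → EuclideanSpace ℝ (Fin n) → EuclideanSpace ℝ (Fin n))
    (humem : ∀ γ > (0:ℝ), ∀ z, ustar γ z ∈ U)
    (hufin : ∀ γ > (0:ℝ), ∀ z, φ (ustar γ z) ≠ ⊤)
    (humax : ∀ γ > (0:ℝ), ∀ z, ∀ v ∈ U,
      (⟪z, v⟫ : EReal) - φ v - ((γ * b v : ℝ) : EReal)
        ≤ (⟪z, ustar γ z⟫ : EReal) - φ (ustar γ z) - ((γ * b (ustar γ z) : ℝ) : EReal))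
    (φs : ℝ → EuclideanSpace ℝ (Fin n) → ℝ)
    (hφs : ∀ γ z, φs γ z = ⟪z, ustar γ z⟫ - (φ (ustar γ z)).toReal - γ * b (ustar γ z))
    {p : ℕ} (hp : 1 ≤ p)
    (A : EuclideanSpace ℝ (Fin n) →L[ℝ] EuclideanSpace ℝ (Fin p))
    (hAnorm : 0 < ‖A‖)
    (b' : EuclideanSpace ℝ (Fin n) → EuclideanSpace ℝ (Fin n))
    (Lb : ℝ) (hLb : 1 ≤ Lb)
    (hbgrad : ∀ v, HasGradientAt b (b' v) v)
    (hbgradlip : LipschitzWith (Real.toNNReal Lb) b')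
    (uc : EuclideanSpace ℝ (Fin n)) (hucU : uc ∈ U) (hbuc : b uc = 0)
    (hucmin : ∀ v ∈ U, b uc ≤ b v)
    (hbsand : ∀ v ∈ U, (1/2) * ‖v - uc‖^2 ≤ b v ∧ b v ≤ (Lb/2) * ‖v - uc‖^2)
    (DU : ℝ)
    (hDUbdd : BddAbove (b '' {v | v ∈ U ∧ φ v ≠ ⊤}))
    (hDU : DU = sSup (b '' {v | v ∈ U ∧ φ v ≠ ⊤}))
    (f : EuclideanSpace ℝ (Fin p) → EReal)
    (hf : ∀ x, f x = ⨆ v ∈ U, ((⟪x, A v⟫ : EReal) - φ v))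
    (g : EuclideanSpace ℝ (Fin p) → EReal)
    (hgbot : ∀ y, g y ≠ ⊥)
    (hgdom : ∃ y, g y ≠ ⊤)
    (hglsc : LowerSemicontinuous g)
    (hgcx : ∀ y w : EuclideanSpace ℝ (Fin p), ∀ a c : ℝ, 0 ≤ a → 0 ≤ c → a + c = 1 →
      g (a • y + c • w) ≤ (a : EReal) * g y + (c : EReal) * g w)
    (prox : ℝ → EuclideanSpace ℝ (Fin p) → EuclideanSpace ℝ (Fin p))
    (hprox : ∀ β > (0:ℝ), ∀ x y,
      g (prox β x) + (((2*β)⁻¹ * ‖prox β x - x‖^2 : ℝ) : EReal)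
        ≤ g y + (((2*β)⁻¹ * ‖y - x‖^2 : ℝ) : EReal))
    (hproxu : ∀ β > (0:ℝ), ∀ x y,
      (∀ w, g y + (((2*β)⁻¹ * ‖y - x‖^2 : ℝ) : EReal)
          ≤ g w + (((2*β)⁻¹ * ‖w - x‖^2 : ℝ) : EReal)) → y = prox β x)
    (cb γ1 : ℝ) (hcb : 1 ≤ cb) (hγ1 : 0 < γ1)
    (τ : ℕ → ℝ) (hτ : ∀ k : ℕ, τ k = 1/((k:ℝ) + cb))
    (γs : ℕ → ℝ) (hγs : ∀ k : ℕ, γs k = γ1 * cb / ((k:ℝ) + cb - 1))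
    (x xt xh : ℕ → EuclideanSpace ℝ (Fin p))
    (hxt0 : xt 0 = x 0) (hx0dom : f (x 0) + g (x 0) ≠ ⊤)
    (hxh : ∀ k : ℕ, xh k = (1 - τ k) • x k + τ k • xt k)
    (hxrec : ∀ k : ℕ, x (k+1)
        = prox (γs (k+1)/‖A‖^2) (xh k - (γs (k+1)/‖A‖^2) • A (ustar (γs (k+1)) ((ContinuousLinearMap.adjoint A) (xh k)))))
    (hxtrec : ∀ k : ℕ, xt (k+1) = xt k - (τ k)⁻¹ • (xh k - x (k+1)))
    (xs : EuclideanSpace ℝ (Fin p)) (Fs : ℝ)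
    (hFs : f xs + g xs = (Fs : EReal)) (hFmin : ∀ y, (Fs : EReal) ≤ f y + g y)
    (S : ℕ → ℝ)
    (hS : ∀ k : ℕ, S k = γ1^2 * cb^2 *
        ∑ i ∈ Finset.range (k+1), ((Lb - 1)/((i:ℝ) + cb) + 1/((i:ℝ) + cb)^2))
    :
    ∀ k : ℕ,
      (((φs (γs (k+1)) ((ContinuousLinearMap.adjoint A) (x (k+1))) : ℝ) : EReal) + g (x (k+1))) - (Fs : EReal)
        ≤ (((τ k)^2 / γs (k+1) : ℝ) : EReal) *
            ( (((1 - τ 0) * γ1 / (τ 0)^2 : ℝ) : EReal) *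
                ((((φs (γs 0) ((ContinuousLinearMap.adjoint A) (x 0)) : ℝ) : EReal) + g (x 0)) - (Fs : EReal))
              + ((‖A‖^2/2 * ‖x 0 - xs‖^2 + S k * DU : ℝ) : EReal) ) :=
  stmt_14_general U hUcx φ hφbot hφcx b hbsc ustar humem hufin humax φs hφs A hAnorm Lb hLb uc hbuc
    hucmin DU hDUbdd hDU f hf g hgbot hgcx prox hprox cb γ1 hcb hγ1 τ hτ γs hγs x xt xh hxt0 hx0dom
    hxh hxrec hxtrec xs Fs hFs S hS
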